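/- Let A be a diagonalizable derivation of the Heisenberg algebra 𝓗_n with positive eigenvalues α_1 < ⋯ < α_{k+1} and eigenspaces U_1, …, U_{k+1}. Then the eigenspace U_{k+1} of the largest eigenvalue equals the center 𝓩(𝓗_n) of 𝓗_n; in particular dim U_{k+1} = 1. -/

import Mathlib

open scoped BigOperators RealInnerProductSpace ENNReal
open Module Filter

noncomputable section

/-- The underlying space of the `n`-th Heisenberg group/algebra: `ℝ^{2n+1}`
with a fixed inner product. -/
abbrev HV (n : ℕ) : Type := EuclideanSpace ℝ (Fin (2 * n + 1))

/-- `br` is a Heisenberg Lie bracket on `ℝ^{2n+1}`: with respect to some basis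
`b`, the only nontrivial bracket relations are `[b_{2s}, b_{2s+1}] = b_{2n}` (0-indexed). -/
def IsHeisenbergBracket (n : ℕ) (br : HV n →ₗ[ℝ] HV n →ₗ[ℝ] HV n) : Prop :=
  ∃ b : Basis (Fin (2 * n + 1)) ℝ (HV n),
    ∀ i j : Fin (2 * n + 1),
      br (b i) (b j) =
        (if (i : ℕ) % 2 = 0 ∧ (j : ℕ) = (i : ℕ) + 1 ∧ (i : ℕ) < 2 * n then (1 : ℝ)
         else if (j : ℕ) % 2 = 0 ∧ (i : ℕ) = (j : ℕ) + 1 ∧ (j : ℕ) < 2 * n then (-1 : ℝ)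
         else 0) • b ⟨2 * n, by omega⟩

/-- `A` is a derivation of the Lie algebra `(ℝ^{2n+1}, br)`. -/
def IsDerivation {n : ℕ} (br : HV n →ₗ[ℝ] HV n →ₗ[ℝ] HV n)
    (A : HV n →ₗ[ℝ] HV n) : Prop :=
  ∀ x y, A (br x y) = br (A x) y + br x (A y)

/-- The group product `x * y = x + y + (1/2)[x,y]` (BCH formula). -/
def hMul {n : ℕ} (br : HV n →ₗ[ℝ] HV n →ₗ[ℝ] HV n) (x y : HV n) : HV n :=
  x + y + (2⁻¹ : ℝ) • br x y

/-- The left coset `g * S`. -/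
def leftCoset {n : ℕ} (br : HV n →ₗ[ℝ] HV n →ₗ[ℝ] HV n) (g : HV n)
    (S : Set (HV n)) : Set (HV n) :=
  hMul br g '' S

/-- `‖x‖_A = Σ_i |x_i|^{1/α_i}`, where `x_i` is the component of `x` in the
eigenspace `U i` (computed as the orthogonal projection; the eigenspaces are
assumed mutually orthogonal with sum everything). -/
def normA {n k : ℕ} (α : Fin (k + 1) → ℝ) (U : Fin (k + 1) → Submodule ℝ (HV n))
    (x : HV n) : ℝ :=
  ∑ i, ‖(Submodule.orthogonalProjectionOnto (U i) x : HV n)‖ ^ (α i)⁻¹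

/-- The parabolic visual quasimetric `d_A(p,q) = ‖(-p) * q‖_A`. -/
def qd {n k : ℕ} (br : HV n →ₗ[ℝ] HV n →ₗ[ℝ] HV n) (α : Fin (k + 1) → ℝ)
    (U : Fin (k + 1) → Submodule ℝ (HV n)) (p q : HV n) : ℝ :=
  normA α U (hMul br (-p) q)

/-- `η` is a homeomorphism of `[0,∞)` onto itself. -/
def IsHomeoOfNonneg (η : ℝ → ℝ) : Prop :=
  η 0 = 0 ∧ StrictMonoOn η (Set.Ici 0) ∧ ContinuousOn η (Set.Ici 0) ∧
    ∀ s : ℝ, 0 ≤ s → ∃ t : ℝ, 0 ≤ t ∧ η t = s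

/-- `F` is an `η`-quasisymmetry from `(X, d1)` to `(X, d2)`. -/
def IsQS {X : Type*} (d1 d2 : X → X → ℝ) (η : ℝ → ℝ) (F : X → X) : Prop :=
  Function.Bijective F ∧
    ∀ x y z : X, x ≠ y → y ≠ z → x ≠ z →
      d2 (F x) (F y) / d2 (F x) (F z) ≤ η (d1 x y / d1 x z)

/-- `L_F(x,r) = sup { d2(F x, F x') : d1(x,x') ≤ r }`. -/
def LFr {X : Type*} (d1 d2 : X → X → ℝ) (F : X → X) (x : X) (r : ℝ) : ℝ≥0∞ :=
  ⨆ (x' : X) (_ : d1 x x' ≤ r), ENNReal.ofReal (d2 (F x) (F x'))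

/-- `l_F(x,r) = inf { d2(F x, F x') : d1(x,x') ≥ r }`. -/
def lFr {X : Type*} (d1 d2 : X → X → ℝ) (F : X → X) (x : X) (r : ℝ) : ℝ≥0∞ :=
  ⨅ (x' : X) (_ : r ≤ d1 x x'), ENNReal.ofReal (d2 (F x) (F x'))

/-- `L_F(x) = limsup_{r→0⁺} L_F(x,r)/r`. -/
def LF {X : Type*} (d1 d2 : X → X → ℝ) (F : X → X) (x : X) : ℝ≥0∞ :=
  Filter.limsup (fun r : ℝ => LFr d1 d2 F x r / ENNReal.ofReal r) (nhdsWithin 0 (Set.Ioi 0))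

/-- `l_F(x) = liminf_{r→0⁺} l_F(x,r)/r`. -/
def lF {X : Type*} (d1 d2 : X → X → ℝ) (F : X → X) (x : X) : ℝ≥0∞ :=
  Filter.liminf (fun r : ℝ => lFr d1 d2 F x r / ENNReal.ofReal r) (nhdsWithin 0 (Set.Ioi 0))

/-!
A derivation maps the bracket of eigenvectors for `a` and `b` to an eigenvector for `a + b`.
As `α_{k+1} + α_i` exceeds every eigenvalue, the top eigenspace brackets trivially with every
eigenspace, hence with everything, so it lies in the centre. The centre of the Heisenberg
algebra is a line and the top eigenspace is nonzero, so the two coincide.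
-/

namespace Module.End

variable {R M : Type*} [CommRing R] [AddCommGroup M] [Module R M]

theorem eigenspace_eq_bot_of_iSup_eigenspace_eq_top [IsDomain R] [IsTorsionFree R M]
    {ι : Type*} (f : End R M) (α : ι → R) (hα : ⨆ i, f.eigenspace (α i) = ⊤) {μ : R}
    (hμ : ∀ i, α i ≠ μ) : f.eigenspace μ = ⊥ :=
  (f.eigenspaces_iSupIndep μ).eq_bot_of_le <| le_top.trans <| hα.symm.le.trans <|
    iSup_le fun i ↦ le_iSup₂_of_le (α i) (hμ i) le_rfl

theorem apply_mem_eigenspace_add_of_derivation (br : M →ₗ[R] M →ₗ[R] M) {A : End R M}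
    (hA : ∀ x y, A (br x y) = br (A x) y + br x (A y)) {a b : R} {x y : M}
    (hx : x ∈ A.eigenspace a) (hy : y ∈ A.eigenspace b) : br x y ∈ A.eigenspace (a + b) := by
  rw [mem_eigenspace_iff] at *
  rw [hA, hx, hy, map_smul, map_smul, LinearMap.smul_apply, add_smul]

theorem eq_zero_of_mem_eigenspace_of_derivation [IsDomain R] [IsTorsionFree R M]
    {ι : Type*} (br : M →ₗ[R] M →ₗ[R] M) {A : End R M}
    (hA : ∀ x y, A (br x y) = br (A x) y + br x (A y)) (α : ι → R)
    (hα : ⨆ i, A.eigenspace (α i) = ⊤) {a : R} (ha : ∀ i j, α j ≠ a + α i) {x : M}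
    (hx : x ∈ A.eigenspace a) : br x = 0 := by
  suffices ⊤ ≤ LinearMap.ker (br x) from LinearMap.ker_eq_top.mp (top_le_iff.mp this)
  refine hα ▸ iSup_le fun i y hy ↦ ?_
  have := apply_mem_eigenspace_add_of_derivation br hA hx hy
  rwa [eigenspace_eq_bot_of_iSup_eigenspace_eq_top A α hα (ha i), Submodule.mem_bot] at this

end Module.End

/-- The structure constants of the Heisenberg bracket: `[b i, b j] = heisCoeff n i j • b (2n)`. -/
def heisCoeff (n : ℕ) (i j : Fin (2 * n + 1)) : ℝ :=
  if (i : ℕ) % 2 = 0 ∧ (j : ℕ) = (i : ℕ) + 1 ∧ (i : ℕ) < 2 * n then 1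
  else if (j : ℕ) % 2 = 0 ∧ (i : ℕ) = (j : ℕ) + 1 ∧ (j : ℕ) < 2 * n then -1
  else 0

theorem exists_heisCoeff_ne_zero_iff {n : ℕ} (m : Fin (2 * n + 1)) (hm : (m : ℕ) < 2 * n) :
    ∃ j, ∀ i, heisCoeff n i j ≠ 0 ↔ i = m := by
  rcases Nat.even_or_odd' (m : ℕ) with ⟨r, hr | hr⟩
  · refine ⟨⟨m + 1, by omega⟩, fun i ↦ ?_⟩
    simp only [heisCoeff, Fin.ext_iff]
    split_ifs <;> norm_num <;> omega
  · refine ⟨⟨m - 1, by omega⟩, fun i ↦ ?_⟩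
    simp only [heisCoeff, Fin.ext_iff]
    split_ifs <;> norm_num <;> omega

theorem IsHeisenbergBracket.finrank_ker_le_one {n : ℕ} {br : HV n →ₗ[ℝ] HV n →ₗ[ℝ] HV n}
    (hbr : IsHeisenbergBracket n br) : finrank ℝ (LinearMap.ker br) ≤ 1 := by
  obtain ⟨b, hb⟩ := hbr
  obtain ⟨ω, hω, hb⟩ : ∃ ω : Fin (2 * n + 1), (ω : ℕ) = 2 * n ∧
      ∀ i j, br (b i) (b j) = heisCoeff n i j • b ω := ⟨_, rfl, hb⟩
  have hcoord : ∀ z j, br z (b j) = (∑ i, b.repr z i * heisCoeff n i j) • b ω := by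
    intro z j
    conv_lhs => rw [← b.sum_repr z]
    simp only [map_sum, map_smul, LinearMap.sum_apply, LinearMap.smul_apply,
      hb, smul_smul, Finset.sum_smul]
  have hrepr : ∀ z ∈ LinearMap.ker br, ∀ m ≠ ω, b.repr z m = 0 := by
    intro z hz m hm
    have hm : (m : ℕ) < 2 * n := by have := m.isLt; have := Fin.val_ne_of_ne hm; omega
    obtain ⟨j, hj⟩ := exists_heisCoeff_ne_zero_iff m hm
    have hsum : ∑ i, b.repr z i * heisCoeff n i j = 0 := by
      simpa [LinearMap.mem_ker.mp hz, b.ne_zero ω] using (hcoord z j).symm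
    rw [Fintype.sum_eq_single m fun i hi ↦ by rw [not_not.mp (mt (hj i).mp hi), mul_zero]] at hsum
    exact (mul_eq_zero.mp hsum).resolve_right ((hj m).mpr rfl)
  have hspan : LinearMap.ker br ≤ Submodule.span ℝ {b ω} := fun z hz ↦ by
    refine Submodule.mem_span_singleton.mpr ⟨b.repr z ω, ?_⟩
    conv_rhs => rw [← b.sum_repr z]
    refine (Fintype.sum_eq_single (f := fun i ↦ b.repr z i • b i) ω fun i hi ↦ ?_).symm
    rw [hrepr z hz i hi, zero_smul]
  calc finrank ℝ (LinearMap.ker br) ≤ finrank ℝ (Submodule.span ℝ {b ω}) :=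
        Submodule.finrank_mono hspan
    _ = 1 := finrank_span_singleton (b.ne_zero ω)

theorem stmt0_general
    (n k : ℕ)
    (br : HV n →ₗ[ℝ] HV n →ₗ[ℝ] HV n) (hbr : IsHeisenbergBracket n br)
    (A : HV n →ₗ[ℝ] HV n) (hA : IsDerivation br A)
    (α : Fin (k + 1) → ℝ) (hαmono : StrictMono α) (hαpos : ∀ i, 0 < α i)
    (U : Fin (k + 1) → Submodule ℝ (HV n))
    (hU : ∀ i, U i = Module.End.eigenspace A (α i))
    (hUne : ∀ i, U i ≠ ⊥) (hUspan : (⨆ i, U i) = ⊤) :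
    ((U (Fin.last k) : Set (HV n)) = {z : HV n | ∀ x : HV n, br z x = 0}) ∧
      Module.finrank ℝ (U (Fin.last k)) = 1 := by
  obtain rfl : U = fun i ↦ Module.End.eigenspace A (α i) := funext hU
  have hα_top : ∀ i j, α j ≠ α (Fin.last k) + α i := fun i j ↦
    ((hαmono.monotone (Fin.le_last j)).trans_lt (lt_add_of_pos_right _ (hαpos i))).ne
  have hle : Module.End.eigenspace A (α (Fin.last k)) ≤ LinearMap.ker br := fun x hx ↦
    Module.End.eq_zero_of_mem_eigenspace_of_derivation br hA α hUspan hα_top hx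
  have hpos : 1 ≤ finrank ℝ (Module.End.eigenspace A (α (Fin.last k))) :=
    Submodule.one_le_finrank_iff.mpr (hUne _)
  have heq : Module.End.eigenspace A (α (Fin.last k)) = LinearMap.ker br :=
    Submodule.eq_of_le_of_finrank_le hle (hbr.finrank_ker_le_one.trans hpos)
  refine ⟨?_, le_antisymm (heq ▸ hbr.finrank_ker_le_one :) hpos⟩
  ext z
  simp [heq, LinearMap.ext_iff]

theorem stmt0
    (n k : ℕ) (hn : 1 ≤ n) (hk : 1 ≤ k)
    (br : HV n →ₗ[ℝ] HV n →ₗ[ℝ] HV n) (hbr : IsHeisenbergBracket n br)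
    (A : HV n →ₗ[ℝ] HV n) (hA : IsDerivation br A)
    (α : Fin (k + 1) → ℝ) (hαmono : StrictMono α) (hαpos : ∀ i, 0 < α i)
    (U : Fin (k + 1) → Submodule ℝ (HV n))
    (hU : ∀ i, U i = Module.End.eigenspace A (α i))
    (hUne : ∀ i, U i ≠ ⊥) (hUspan : (⨆ i, U i) = ⊤) :
    ((U (Fin.last k) : Set (HV n)) = {z : HV n | ∀ x : HV n, br z x = 0}) ∧
      Module.finrank ℝ (U (Fin.last k)) = 1 :=
  stmt0_general n k br hbr A hA α hαmono hαpos U hU hUne hUspan
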